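/- For real v > -1/2 and z ∈ ℝ, the Bessel function of the first kind satisfies the Poisson integral representation Γ(1/2 + v) J_v(z) = 2 π^{-1/2} (z/2)^v ∫₀^{π/2} cos(z cos t) (sin t)^{2v} dt. -/

import Mathlib

/-!
Expand `cos (z cos t) = Σ (-1)^m (z cos t)^(2m) / (2m)!` and integrate term by term against
`sin^(2v) t`; this is legitimate because `|cos| ≤ 1` bounds the integrals of the absolute values
of the terms by `|z|^(2m) / (2m)! * ∫ sin^(2v)`, a summable sequence. The substitution
`x = sin² t` turns each moment into Euler's beta integral,
`∫₀^{π/2} cos^(2m) t sin^(2v) t dt = Γ(v + 1/2) Γ(m + 1/2) / (2 Γ(m + v + 1))`,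
and Legendre's duplication formula `Γ(m + 1/2) m! = (2m)! √π / 4^m` matches the resulting
series with the power series of `J_v`.
-/

noncomputable section

/-- The Bessel function of the first kind of order `v`, defined by its power series
`J_v(z) = Σ_{m≥0} (-1)^m / (m! Γ(m+v+1)) (z/2)^{2m+v}` (with real powers). -/
def besselJ (v z : ℝ) : ℝ :=
  ∑' m : ℕ, (-1 : ℝ) ^ m / (m.factorial * Real.Gamma ((m : ℝ) + v + 1)) *
    (z / 2) ^ (2 * (m : ℝ) + v)

open Set MeasureTheory

namespace Real

theorem rpow_add_natCast_of_neg_one_lt (x : ℝ) {y : ℝ} (hy : -1 < y) (n : ℕ) :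
    x ^ (y + n) = x ^ y * x ^ n := by
  rcases eq_or_ne x 0 with rfl | hx
  · rcases n.eq_zero_or_pos with rfl | hn
    · simp
    · have : (1 : ℝ) ≤ n := by exact_mod_cast hn
      rw [zero_rpow (by linarith), zero_pow hn.ne', mul_zero]
  · exact rpow_add_natCast hx y n

theorem Gamma_natCast_add_half (m : ℕ) :
    Gamma (m + 1 / 2) = (2 * m).factorial * √π / (4 ^ m * m.factorial) := by
  rw [eq_div_iff (by positivity), mul_comm (4 ^ m : ℝ), ← mul_assoc, ← eq_div_iff (by positivity)]
  have h := Gamma_mul_Gamma_add_half (m + 1 / 2)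
  rw [show (m : ℝ) + 1 / 2 + 1 / 2 = m + 1 by ring,
    show 2 * ((m : ℝ) + 1 / 2) = (2 * m : ℕ) + 1 by push_cast; ring,
    Gamma_nat_eq_factorial, Gamma_nat_eq_factorial] at h
  rw [h, show (1 : ℝ) - ((2 * m : ℕ) + 1) = -(2 * m : ℕ) by ring, rpow_neg (by norm_num),
    rpow_natCast, pow_mul]
  norm_num
  ring

theorem ofReal_beta_integrand {a b x : ℝ} (hx : x ∈ Icc (0 : ℝ) 1) :
    ((x ^ (a - 1) * (1 - x) ^ (b - 1) : ℝ) : ℂ)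
      = (x : ℂ) ^ ((a : ℂ) - 1) * (1 - (x : ℂ)) ^ ((b : ℂ) - 1) := by
  push_cast [Complex.ofReal_cpow hx.1, Complex.ofReal_cpow (sub_nonneg.2 hx.2)]
  rfl

theorem integrableOn_rpow_mul_one_sub_rpow {a b : ℝ} (ha : 0 < a) (hb : 0 < b) :
    IntegrableOn (fun x : ℝ ↦ x ^ (a - 1) * (1 - x) ^ (b - 1)) (Ioo 0 1) := by
  have h := (Complex.betaIntegral_convergent (u := a) (v := b) (by simpa) (by simpa)).1
  refine (IntegrableOn.congr_fun h.re (fun x hx ↦ ?_) measurableSet_Ioc).mono_set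
    Ioo_subset_Ioc_self
  rw [← ofReal_beta_integrand (Ioc_subset_Icc_self hx), RCLike.re_to_complex, Complex.ofReal_re]

theorem integral_rpow_mul_one_sub_rpow {a b : ℝ} (ha : 0 < a) (hb : 0 < b) :
    ∫ x in Ioo 0 1, x ^ (a - 1) * (1 - x) ^ (b - 1) = Gamma a * Gamma b / Gamma (a + b) := by
  apply Complex.ofReal_injective
  rw [← integral_Ioc_eq_integral_Ioo, ← intervalIntegral.integral_of_le zero_le_one,
    ← intervalIntegral.integral_ofReal,
    intervalIntegral.integral_congr
      (g := fun x : ℝ ↦ (x : ℂ) ^ ((a : ℂ) - 1) * (1 - (x : ℂ)) ^ ((b : ℂ) - 1))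
      (fun x hx ↦ ofReal_beta_integrand (by rwa [uIcc_of_le zero_le_one] at hx)),
    ← Complex.betaIntegral, Complex.betaIntegral_eq_Gamma_mul_div _ _ (by simpa) (by simpa),
    ← Complex.ofReal_add]
  simp only [Complex.Gamma_ofReal, Complex.ofReal_mul, Complex.ofReal_div]

theorem strictMonoOn_sin_sq : StrictMonoOn (fun t ↦ sin t ^ 2) (Icc 0 (π / 2)) :=
  fun s hs t ht hst ↦ pow_lt_pow_left₀
    (strictMonoOn_sin ⟨by linarith [hs.1, pi_pos], hs.2⟩ ⟨by linarith [ht.1, pi_pos], ht.2⟩ hst)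
    (sin_nonneg_of_nonneg_of_le_pi hs.1 (by linarith [hs.2, pi_pos])) two_ne_zero

theorem image_sin_sq_Ioo : (fun t ↦ sin t ^ 2) '' Ioo 0 (π / 2) = Ioo 0 1 := by
  rw [(by fun_prop : Continuous fun t ↦ sin t ^ 2).continuousOn.image_Ioo_of_strictMonoOn
    (by positivity) strictMonoOn_sin_sq]
  simp

theorem mul_rpow_sq_sub_one {s : ℝ} (hs : 0 < s) (a : ℝ) :
    s * (s ^ 2) ^ (a - 1) = s ^ (2 * a - 1) := by
  rw [← rpow_natCast, ← rpow_mul hs.le, show 2 * a - 1 = 1 + (2 : ℕ) * (a - 1) by push_cast; ring,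
    rpow_add hs, rpow_one]

theorem abs_deriv_smul_beta_integrand {a b t : ℝ} (ht : t ∈ Ioo 0 (π / 2)) :
    |2 * sin t * cos t| • ((sin t ^ 2) ^ (a - 1) * (1 - sin t ^ 2) ^ (b - 1))
      = 2 * (sin t ^ (2 * a - 1) * cos t ^ (2 * b - 1)) := by
  have hsin : 0 < sin t := sin_pos_of_pos_of_lt_pi ht.1 (by linarith [ht.2, pi_pos])
  have hcos : 0 < cos t := cos_pos_of_mem_Ioo ⟨by linarith [ht.1, pi_pos], ht.2⟩
  rw [smul_eq_mul, abs_of_pos (by positivity), ← cos_sq', ← mul_rpow_sq_sub_one hsin,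
    ← mul_rpow_sq_sub_one hcos]
  ring

theorem hasDerivWithinAt_sin_sq (s : Set ℝ) (t : ℝ) :
    HasDerivWithinAt (fun t ↦ sin t ^ 2) (2 * sin t * cos t) s t :=
  (((hasDerivAt_sin t).pow 2).hasDerivWithinAt).congr_deriv (by push_cast; ring)

theorem integrableOn_sin_rpow_mul_cos_rpow {a b : ℝ} (ha : 0 < a) (hb : 0 < b) :
    IntegrableOn (fun t ↦ sin t ^ (2 * a - 1) * cos t ^ (2 * b - 1)) (Ioo 0 (π / 2)) := by
  have h := integrableOn_rpow_mul_one_sub_rpow ha hb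
  rw [← image_sin_sq_Ioo, integrableOn_image_iff_integrableOn_abs_deriv_smul measurableSet_Ioo
    (fun t _ ↦ hasDerivWithinAt_sin_sq _ t)
    (strictMonoOn_sin_sq.injOn.mono Ioo_subset_Icc_self)] at h
  refine (integrable_const_mul_iff (isUnit_of_invertible (2 : ℝ)) _).1 ?_
  exact h.congr_fun (fun t ht ↦ abs_deriv_smul_beta_integrand ht) measurableSet_Ioo

theorem integral_sin_rpow_mul_cos_rpow {a b : ℝ} (ha : 0 < a) (hb : 0 < b) :
    ∫ t in Ioo 0 (π / 2), sin t ^ (2 * a - 1) * cos t ^ (2 * b - 1)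
      = Gamma a * Gamma b / (2 * Gamma (a + b)) := by
  have h := integral_rpow_mul_one_sub_rpow ha hb
  rw [← image_sin_sq_Ioo, integral_image_eq_integral_abs_deriv_smul measurableSet_Ioo
    (fun t _ ↦ hasDerivWithinAt_sin_sq _ t) (strictMonoOn_sin_sq.injOn.mono Ioo_subset_Icc_self),
    setIntegral_congr_fun measurableSet_Ioo (fun t ht ↦ abs_deriv_smul_beta_integrand ht),
    integral_const_mul] at h
  rw [mul_comm 2 (Gamma (a + b)), ← div_div, ← h]
  ring

theorem summable_pow_two_mul_div_factorial (x : ℝ) :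
    Summable fun m : ℕ ↦ x ^ (2 * m) / (2 * m).factorial :=
  (summable_pow_div_factorial x).comp_injective fun _ _ h ↦ by simpa using h

theorem hasSum_integral_cos_mul {α : Type*} [MeasurableSpace α] {μ : Measure α} {f w : α → ℝ}
    (hf : AEStronglyMeasurable f μ) (hf_le : ∀ᵐ x ∂μ, |f x| ≤ 1) (hw : Integrable w μ) (z : ℝ) :
    HasSum (fun m : ℕ ↦ (-1) ^ m * z ^ (2 * m) / (2 * m).factorial * ∫ x, f x ^ (2 * m) * w x ∂μ)
      (∫ x, cos (z * f x) * w x ∂μ) := by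
  set F : ℕ → α → ℝ := fun m x ↦ (-1) ^ m * (z * f x) ^ (2 * m) / (2 * m).factorial * w x
  have hF : ∀ m,
      F m = fun x ↦ (-1) ^ m * z ^ (2 * m) / (2 * m).factorial * (f x ^ (2 * m) * w x) :=
    fun m ↦ funext fun x ↦ by simp only [F, mul_pow]; ring
  have hpow_le : ∀ m, ∀ᵐ x ∂μ, ‖f x ^ (2 * m)‖ ≤ 1 := fun m ↦ hf_le.mono fun x hx ↦ by
    simpa [norm_pow] using pow_le_one₀ (abs_nonneg _) hx
  have hF_int : ∀ m, Integrable (F m) μ := fun m ↦ by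
    rw [hF]; exact (hw.bdd_mul (hf.pow _) (hpow_le m)).const_mul _
  have hF_norm : ∀ m, ∫ x, ‖F m x‖ ∂μ ≤ |z| ^ (2 * m) / (2 * m).factorial * ∫ x, ‖w x‖ ∂μ := by
    intro m
    rw [← integral_const_mul]
    refine integral_mono_ae (hF_int m).norm (hw.norm.const_mul _) ?_
    filter_upwards [hpow_le m] with x hx
    have hc : ‖(-1) ^ m * z ^ (2 * m) / (2 * m).factorial‖
        = |z| ^ (2 * m) / (2 * m).factorial := by
      simp
    rw [hF, norm_mul, norm_mul, hc]
    gcongr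
    exact mul_le_of_le_one_left (norm_nonneg _) hx
  have hsum : ∀ x, ∑' m, F m x = cos (z * f x) * w x :=
    fun x ↦ ((hasSum_cos (z * f x)).mul_right (w x)).tsum_eq
  have := hasSum_integral_of_summable_integral_norm hF_int <|
    ((summable_pow_two_mul_div_factorial |z|).mul_right _).of_nonneg_of_le
      (fun m ↦ integral_nonneg fun x ↦ norm_nonneg _) hF_norm
  have hterm : ∀ m, ∫ x, F m x ∂μ
      = (-1) ^ m * z ^ (2 * m) / (2 * m).factorial * ∫ x, f x ^ (2 * m) * w x ∂μ :=
    fun m ↦ by rw [hF, integral_const_mul]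
  simpa only [hsum, hterm] using this

end Real

open Real

/-- Poisson integral representation of the Bessel function: for real `v > -1/2` and `z ∈ ℝ`,
`Γ(1/2 + v) J_v(z) = 2 π^{-1/2} (z/2)^v ∫₀^{π/2} cos(z cos t) (sin t)^{2v} dt`. -/
theorem besselJ_poisson_integral (v z : ℝ) (hv : -(1/2 : ℝ) < v) :
    Real.Gamma (1/2 + v) * besselJ v z
      = 2 * Real.pi ^ (-(1/2 : ℝ)) * (z / 2) ^ v *
        ∫ t in (0:ℝ)..(Real.pi / 2), Real.cos (z * Real.cos t) * Real.sin t ^ (2 * v) := by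
  rw [add_comm (1 / 2) v]
  have ha : 0 < v + 1 / 2 := by linarith
  have hsin : 2 * (v + 1 / 2) - 1 = 2 * v := by ring
  have hw : IntegrableOn (fun t ↦ sin t ^ (2 * v)) (Ioo 0 (π / 2)) := by
    simpa only [hsin, show 2 * (1 / 2 : ℝ) - 1 = 0 by norm_num, rpow_zero, mul_one] using
      integrableOn_sin_rpow_mul_cos_rpow ha one_half_pos
  have hmoment (m : ℕ) : ∫ t in Ioo 0 (π / 2), cos t ^ (2 * m) * sin t ^ (2 * v)
      = Gamma (v + 1 / 2) * Gamma (m + 1 / 2) / (2 * Gamma (m + v + 1)) := by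
    have := integral_sin_rpow_mul_cos_rpow ha (b := m + 1 / 2) (by positivity)
    rw [hsin, show 2 * ((m : ℝ) + 1 / 2) - 1 = (2 * m : ℕ) by push_cast; ring,
      show v + 1 / 2 + (m + 1 / 2) = m + v + 1 by ring] at this
    simpa only [rpow_natCast, mul_comm (sin _ ^ (2 * v))] using this
  have hseries := hasSum_integral_cos_mul continuous_cos.aestronglyMeasurable
    (ae_of_all _ abs_cos_le_one) hw z
  rw [intervalIntegral.integral_of_le (by positivity), integral_Ioc_eq_integral_Ioo,
    ← hseries.tsum_eq, besselJ, ← tsum_mul_left, ← tsum_mul_left]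
  refine tsum_congr fun m ↦ ?_
  rw [hmoment, show 2 * (m : ℝ) + v = v + (2 * m : ℕ) by push_cast; ring,
    rpow_add_natCast_of_neg_one_lt _ (by linarith), Gamma_natCast_add_half,
    rpow_neg pi_pos.le, ← sqrt_eq_rpow, div_pow, show (4 : ℝ) ^ m = 2 ^ (2 * m) by
      rw [pow_mul]; norm_num]
  have hΓ : Gamma (m + v + 1) ≠ 0 := (Gamma_pos_of_pos (by linarith [m.cast_nonneg (α := ℝ)])).ne'
  field_simp

end
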